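/- Let ν be an F-invariant Borel probability measure on W with Q_ν := Σ_{J∈S} τ(J) ν(J) < ∞. Then the lifted measure π(ν), defined by π(ν)(E) = (1/Q_ν) Σ_{J∈S} Σ_{k=0}^{τ(J)-1} ν(f^{-k}(E) ∩ J), is f-invariant: π(ν)(f^{-1}(E)) = π(ν)(E) for every measurable set E. -/
import Mathlib


open Set MeasureTheory
open scoped ENNReal

/-- The lifted measure `π(ν)`: `π(ν)(E) = Q_ν⁻¹ ∑_{J∈S} ∑_{k<τ(J)} ν(f⁻ᵏ(E) ∩ J)`. -/
noncomputable def liftMeasure {ι : Type*} (f : ℝ → ℝ) (J : ι → Set ℝ) (τ : ι → ℕ)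
    (ν : Measure ℝ) : Measure ℝ :=
  (∑' i, (τ i : ℝ≥0∞) * ν (J i))⁻¹ •
    Measure.sum (fun p : Σ i, Fin (τ i) => Measure.map (f^[(p.2 : ℕ)]) (ν.restrict (J p.1)))

lemma liftMeasure_apply {ι : Type*} (f : ℝ → ℝ) (hf : Measurable f)
    (J : ι → Set ℝ) (τ : ι → ℕ) (ν : Measure ℝ) {E : Set ℝ} (hE : MeasurableSet E) :
    liftMeasure f J τ ν E =
      (∑' i, (τ i : ℝ≥0∞) * ν (J i))⁻¹ *
        ∑' i, ∑ k : Fin (τ i), ν (f^[(k : ℕ)] ⁻¹' E ∩ J i) := by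
  rw [liftMeasure, Measure.smul_apply, Measure.sum_apply _ hE, ENNReal.tsum_sigma']
  simp only [smul_eq_mul]
  congr 1
  refine tsum_congr fun i => ?_
  rw [tsum_fintype]
  refine Finset.sum_congr rfl fun k _ => ?_
  rw [Measure.map_apply (hf.iterate _) hE, Measure.restrict_apply ((hf.iterate _) hE)]

/-- if `ν` is an `F`-invariant Borel probability measure on the base `W`
with `Q_ν < ∞`, then the lifted measure `π(ν)` is `f`-invariant:
`π(ν)(f⁻¹(E)) = π(ν)(E)` for every measurable `E`. -/
theorem lift_f_invariant {ι : Type*} [Countable ι]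
    (f F : ℝ → ℝ) (hf : Measurable f) (hFm : Measurable F)
    (J : ι → Set ℝ) (hJm : ∀ i, MeasurableSet (J i))
    (hdisj : Pairwise (Function.onFun Disjoint J))
    (τ : ι → ℕ) (hτ : ∀ i, 1 ≤ τ i)
    (hF : ∀ i, ∀ x ∈ J i, F x = f^[τ i] x)
    (ν : Measure ℝ) [IsProbabilityMeasure ν]
    (hinv : MeasurePreserving F ν ν)
    (hW : ν (⋂ n : ℕ, F^[n] ⁻¹' ⋃ i, J i) = 1)
    (hQ : (∑' i, (τ i : ℝ≥0∞) * ν (J i)) < ⊤) :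
    ∀ E : Set ℝ, MeasurableSet E →
      liftMeasure f J τ ν (f ⁻¹' E) = liftMeasure f J τ ν E := by
  intro E hE
  set U : Set ℝ := ⋃ i, J i with hU
  have hUm : MeasurableSet U := MeasurableSet.iUnion hJm
  have hνU : ν U = 1 := by
    refine le_antisymm prob_le_one ?_
    calc (1 : ℝ≥0∞) = ν (⋂ n : ℕ, F^[n] ⁻¹' U) := hW.symm
      _ ≤ ν U := measure_mono (by
          intro x hx
          have := mem_iInter.1 hx 0
          simpa using this)
  have hUc : ν Uᶜ = 0 := by
    rw [measure_compl hUm (measure_ne_top ν U), hνU, measure_univ, tsub_self]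
  -- summing over the partition recovers the measure
  have hinter : ∀ s : Set ℝ, MeasurableSet s → (∑' i, ν (s ∩ J i)) = ν s := by
    intro s hs
    have h1 : (∑' i, ν (s ∩ J i)) = ν (⋃ i, s ∩ J i) :=
      (measure_iUnion
        (fun i j hij => (hdisj hij).mono inter_subset_right inter_subset_right)
        (fun i => hs.inter (hJm i))).symm
    have h2 : ν (s \ U) = 0 := measure_mono_null (diff_subset_compl s U) hUc
    have h3 := measure_inter_add_diff (μ := ν) s hUm
    rw [h1, ← inter_iUnion, ← hU, ← h3, h2, add_zero]
  -- abbreviation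
  set g : ι → ℕ → ℝ≥0∞ := fun i m => ν (f^[m] ⁻¹' E ∩ J i) with hg
  -- preimage shift
  have hshift : ∀ (k : ℕ), f^[k] ⁻¹' (f ⁻¹' E) = f^[k + 1] ⁻¹' E := by
    intro k
    rw [Function.iterate_succ', preimage_comp]
  -- top term equals F-preimage term
  have htop : ∀ i, g i (τ i) = ν (F ⁻¹' E ∩ J i) := by
    intro i
    have hseteq : f^[τ i] ⁻¹' E ∩ J i = F ⁻¹' E ∩ J i := by
      ext x
      constructor
      · rintro ⟨hx1, hx2⟩
        exact ⟨by simpa [mem_preimage, hF i x hx2] using hx1, hx2⟩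
      · rintro ⟨hx1, hx2⟩
        exact ⟨by simpa [mem_preimage, hF i x hx2] using hx1, hx2⟩
    simp only [hg, hseteq]
  -- the two tsums of F-preimage / E agree with ν E
  have hsum0 : (∑' i, g i 0) = ν E := by
    have : (∑' i, g i 0) = ∑' i, ν (E ∩ J i) := by
      refine tsum_congr fun i => ?_
      simp [hg]
    rw [this, hinter E hE]
  have hsumτ : (∑' i, g i (τ i)) = ν E := by
    have : (∑' i, g i (τ i)) = ∑' i, ν (F ⁻¹' E ∩ J i) := tsum_congr htop
    rw [this, hinter _ (hFm hE), hinv.measure_preimage hE.nullMeasurableSet]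
  -- per-index finite sum identity
  have hper : ∀ i, (∑ k : Fin (τ i), g i ((k : ℕ) + 1)) + g i 0
      = (∑ k : Fin (τ i), g i (k : ℕ)) + g i (τ i) := by
    intro i
    have h1 : (∑ k : Fin (τ i + 1), g i (k : ℕ))
        = g i 0 + ∑ k : Fin (τ i), g i ((k : ℕ) + 1) := by
      rw [Fin.sum_univ_succ]
      simp [Fin.val_succ]
    have h2 : (∑ k : Fin (τ i + 1), g i (k : ℕ))
        = (∑ k : Fin (τ i), g i (k : ℕ)) + g i (τ i) := by
      rw [Fin.sum_univ_castSucc]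
      simp
    rw [← h2, h1, add_comm]
  -- main tsum equality
  have hmain : (∑' i, ∑ k : Fin (τ i), ν (f^[(k : ℕ)] ⁻¹' (f ⁻¹' E) ∩ J i))
      = ∑' i, ∑ k : Fin (τ i), ν (f^[(k : ℕ)] ⁻¹' E ∩ J i) := by
    have hL : (∑' i, ∑ k : Fin (τ i), ν (f^[(k : ℕ)] ⁻¹' (f ⁻¹' E) ∩ J i))
        = ∑' i, ∑ k : Fin (τ i), g i ((k : ℕ) + 1) := by
      refine tsum_congr fun i => Finset.sum_congr rfl fun k _ => ?_
      rw [hshift]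
    have key : (∑' i, ∑ k : Fin (τ i), g i ((k : ℕ) + 1)) + ν E
        = (∑' i, ∑ k : Fin (τ i), g i (k : ℕ)) + ν E :=
      calc (∑' i, ∑ k : Fin (τ i), g i ((k : ℕ) + 1)) + ν E
          = (∑' i, ∑ k : Fin (τ i), g i ((k : ℕ) + 1)) + ∑' i, g i 0 := by rw [hsum0]
        _ = ∑' i, ((∑ k : Fin (τ i), g i ((k : ℕ) + 1)) + g i 0) := by
            rw [ENNReal.tsum_add]
        _ = ∑' i, ((∑ k : Fin (τ i), g i (k : ℕ)) + g i (τ i)) := tsum_congr hper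
        _ = (∑' i, ∑ k : Fin (τ i), g i (k : ℕ)) + ∑' i, g i (τ i) := by
            rw [ENNReal.tsum_add]
        _ = (∑' i, ∑ k : Fin (τ i), g i (k : ℕ)) + ν E := by rw [hsumτ]
    have := WithTop.add_right_cancel (measure_ne_top ν E) key
    rw [hL, this]
  rw [liftMeasure_apply f hf J τ ν (hf hE), liftMeasure_apply f hf J τ ν hE, hmain]
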